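/- Fix integers k ≥ 0 and d ≥ 1. Let 𝒦 be a collection of ℝ^d-LMMCs that is compact with respect to the topology induced by the pseudometric d_WL^(k), and let f : 𝒦 → ℝ be continuous with respect to this pseudometric (so in particular f((𝒳,ℓ_X)) = f((𝒴,ℓ_Y)) whenever d_WL^(k)((𝒳,ℓ_X),(𝒴,ℓ_Y)) = 0). Then for every ε > 0 there exists a k-layer Markov chain neural network h ∈ 𝒩𝒩_k(ℝ^d) such that |h((𝒳,ℓ_X)) − f((𝒳,ℓ_X))| < ε for every (𝒳,ℓ_X) ∈ 𝒦; i.e., the restrictions of functions in 𝒩𝒩_k(ℝ^d) to 𝒦 are uniformly dense in the continuous real functions on 𝒦. -/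

import Mathlib

/-!
Every MCNN is continuous for `d_WL^(k)`: by induction on the layers, its labels are Lipschitz for
the iterated costs `D_j`, because the averages of a Lipschitz map against two measures are at most
its constant times the cost of any coupling of the measures apart. Conversely, MCNNs separate
chains at positive distance. If the depth-`k` WL measure hierarchy pushed `μ_X` and `μ_Y` to the
same measure, couplings glued along the hierarchy would make `d_WL^(k)` vanish; and the MCNN whose
layers are Lipschitz extensions of one-hot encodings of the finitely many hierarchy values computes
exactly these pushforwards. Running finitely many MCNNs side by side under a continuous readout
shows that the functions they compute form a subalgebra; it separates the points of the separation
quotient of `𝒦`, so the Stone–Weierstrass theorem applies.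
-/

open scoped BigOperators NNReal

namespace WLGW

variable {X Y W : Type*}

/-- A probability mass function on a finite type. -/
def IsPMF [Fintype X] (p : X → ℝ) : Prop :=
  (∀ x, 0 ≤ p x) ∧ ∑ x, p x = 1

/-- `γ` is a coupling of `p` and `q`. -/
def IsCoupling [Fintype X] [Fintype Y] (p : X → ℝ) (q : Y → ℝ) (γ : X → Y → ℝ) : Prop :=
  (∀ x y, 0 ≤ γ x y) ∧ (∀ x, ∑ y, γ x y = p x) ∧ (∀ y, ∑ x, γ x y = q y)

/-- `(m, μ)` is a measure Markov chain: each `m x` is a pmf, and `μ` is a fully supported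
stationary pmf. -/
def IsMMC [Fintype X] (m : X → X → ℝ) (μ : X → ℝ) : Prop :=
  (∀ x, IsPMF (m x)) ∧ IsPMF μ ∧ (∀ x, 0 < μ x) ∧ (∀ x', ∑ x, m x x' * μ x = μ x')

/-- `dX` is a metric on the finite type `X`. -/
def IsMetricOn [Fintype X] (dX : X → X → ℝ) : Prop :=
  (∀ x, dX x x = 0) ∧ (∀ x y, dX x y = dX y x) ∧ (∀ x y, x ≠ y → 0 < dX x y) ∧
    (∀ x y z, dX x z ≤ dX x y + dX y z)

/-- The iterated Weisfeiler–Lehman cost `D_k`. -/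
noncomputable def costIter [Fintype X] [Fintype Y] (mX : X → X → ℝ) (mY : Y → Y → ℝ)
    (D0 : X → Y → ℝ) : ℕ → X → Y → ℝ
  | 0 => D0
  | k + 1 => fun x y => sInf {r : ℝ | ∃ γ : X → Y → ℝ, IsCoupling (mX x) (mY y) γ ∧
      r = ∑ x', ∑ y', costIter mX mY D0 k x' y' * γ x' y'}

/-- The Weisfeiler–Lehman distance of depth `k` between two labeled measure Markov chains. -/
noncomputable def dWL {Z : Type*} [PseudoMetricSpace Z] [Fintype X] [Fintype Y]
    (mX : X → X → ℝ) (μX : X → ℝ) (ℓX : X → Z)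
    (mY : Y → Y → ℝ) (μY : Y → ℝ) (ℓY : Y → Z) (k : ℕ) : ℝ :=
  sInf {r : ℝ | ∃ γ : X → Y → ℝ, IsCoupling μX μY γ ∧
      r = ∑ x, ∑ y, costIter mX mY (fun x y => dist (ℓX x) (ℓY y)) k x y * γ x y}

/-- The absolute Weisfeiler–Lehman distance. -/
noncomputable def dWLsup {Z : Type*} [PseudoMetricSpace Z] [Fintype X] [Fintype Y]
    (mX : X → X → ℝ) (μX : X → ℝ) (ℓX : X → Z)
    (mY : Y → Y → ℝ) (μY : Y → ℝ) (ℓY : Y → Z) : ℝ :=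
  ⨆ k : ℕ, dWL mX μX ℓX mY μY ℓY k

/-- Isomorphism of labeled measure Markov chains. -/
def LMMCIso {Z : Type*} [Fintype X] [Fintype Y]
    (mX : X → X → ℝ) (μX : X → ℝ) (ℓX : X → Z)
    (mY : Y → Y → ℝ) (μY : Y → ℝ) (ℓY : Y → Z) : Prop :=
  ∃ ψ : X ≃ Y, (∀ x, ℓY (ψ x) = ℓX x) ∧ (∀ x x', mY (ψ x) (ψ x') = mX x x') ∧
    (∀ x, μY (ψ x) = μX x)

/-- The `q`-Markov kernel of a finite simple graph. -/
noncomputable def graphKernel {V : Type*} [Fintype V] [DecidableEq V] (G : SimpleGraph V) [DecidableRel G.Adj]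
    (q : ℝ) (v v' : V) : ℝ :=
  if G.degree v = 0 then (if v' = v then 1 else 0)
  else (if v' = v then q else 0) + (if G.Adj v v' then (1 - q) / (G.degree v : ℝ) else 0)

/-- The stationary degree measure of a finite simple graph. -/
noncomputable def graphMu {V : Type*} [Fintype V] (G : SimpleGraph V) [DecidableRel G.Adj]
    (v : V) : ℝ :=
  ((max (G.degree v) 1 : ℕ) : ℝ) / ∑ v', ((max (G.degree v') 1 : ℕ) : ℝ)

/-- The type of depth-`k` Weisfeiler–Lehman labels over an initial label set `Z`. -/
def WLType (Z : Type*) : ℕ → Type _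
  | 0 => Z
  | k + 1 => WLType Z k × Multiset (WLType Z k)

/-- The Weisfeiler–Lehman label hierarchy `ℓ^k` of a labeled graph. -/
def wlLabel {V Z : Type*} [Fintype V] (G : SimpleGraph V) [DecidableRel G.Adj] (ℓ : V → Z) :
    (k : ℕ) → V → WLType Z k
  | 0 => ℓ
  | k + 1 => fun v => (wlLabel G ℓ k v, (G.neighborFinset v).val.map (wlLabel G ℓ k))

/-- The multiset `L_k((G, ℓ))` of depth-`k` WL labels of all vertices. -/
def wlMultiset {V Z : Type*} [Fintype V] (G : SimpleGraph V) [DecidableRel G.Adj]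
    (ℓ : V → Z) (k : ℕ) : Multiset (WLType Z k) :=
  Finset.univ.val.map (wlLabel G ℓ k)

/-- The WL test distinguishes two labeled graphs. -/
def WLDistinguishes {V₁ V₂ Z : Type*} [Fintype V₁] [Fintype V₂]
    (G₁ : SimpleGraph V₁) [DecidableRel G₁.Adj] (ℓ₁ : V₁ → Z)
    (G₂ : SimpleGraph V₂) [DecidableRel G₂.Adj] (ℓ₂ : V₂ → Z) : Prop :=
  ∃ k, wlMultiset G₁ ℓ₁ k ≠ wlMultiset G₂ ℓ₂ k

/-- The relabeling `ℓ^g(v) = g(ℓ(v), deg v, |V|)`. -/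
def relabel {V Z Z₁ : Type*} [Fintype V] (G : SimpleGraph V) [DecidableRel G.Adj]
    (ℓ : V → Z) (g : Z × ℕ × ℕ → Z₁) : V → Z₁ :=
  fun v => g (ℓ v, G.degree v, Fintype.card V)

/-- `kpow m k = m^{⊗k}`, the `k`-step Markov kernel (`kpow m 0` is the identity kernel). -/
def kpow [Fintype X] [DecidableEq X] (m : X → X → ℝ) : ℕ → X → X → ℝ
  | 0 => fun x x' => if x' = x then 1 else 0
  | k + 1 => fun x x'' => ∑ x', kpow m k x' x'' * m x x'

/-- The Wasserstein distance between the pushforwards `(ℓX)_# p` and `(ℓY)_# q`, expressed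
through couplings of `p` and `q`. -/
noncomputable def wassersteinCost {Z : Type*} [PseudoMetricSpace Z] [Fintype X] [Fintype Y]
    (ℓX : X → Z) (ℓY : Y → Z) (p : X → ℝ) (q : Y → ℝ) : ℝ :=
  sInf {r : ℝ | ∃ γ : X → Y → ℝ, IsCoupling p q γ ∧
      r = ∑ x, ∑ y, dist (ℓX x) (ℓY y) * γ x y}

/-- The lower bound `d_WLLB^(k)` for the WL distance. -/
noncomputable def dWLLB {Z : Type*} [PseudoMetricSpace Z] [Fintype X] [Fintype Y]
    [DecidableEq X] [DecidableEq Y]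
    (mX : X → X → ℝ) (μX : X → ℝ) (ℓX : X → Z)
    (mY : Y → Y → ℝ) (μY : Y → ℝ) (ℓY : Y → Z) (k : ℕ) : ℝ :=
  sInf {r : ℝ | ∃ γ : X → Y → ℝ, IsCoupling μX μY γ ∧
      r = ∑ x, ∑ y, wassersteinCost ℓX ℓY (kpow mX k x) (kpow mY k y) * γ x y}

/-- Dimension sequence of an MCNN: `mcnnDim d dims 0 = d`, then `dims`. -/
def mcnnDim (d : ℕ) (dims : ℕ → ℕ) : ℕ → ℕ
  | 0 => d
  | i + 1 => dims i

/-- A `k`-layer Markov chain neural network on `ℝ^d`-LMMCs: Lipschitz maps `φ_1, …, φ_{k+1}`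
followed by a continuous map `ψ`. -/
structure MCNN (d k : ℕ) where
  dims : ℕ → ℕ
  φ : (i : ℕ) → EuclideanSpace ℝ (Fin (mcnnDim d dims i)) →
      EuclideanSpace ℝ (Fin (mcnnDim d dims (i + 1)))
  φ_lip : ∀ i, ∃ K : ℝ≥0, LipschitzWith K (φ i)
  ψ : EuclideanSpace ℝ (Fin (mcnnDim d dims (k + 1))) → ℝ
  ψ_cont : Continuous ψ

/-- Labels after `j` layers of an MCNN (the map `F_{φ_j} ∘ ⋯ ∘ F_{φ_1}`). -/
noncomputable def mcnnLabel {X : Type*} [Fintype X] {d k : ℕ} (N : MCNN d k)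
    (m : X → X → ℝ) (ℓ : X → EuclideanSpace ℝ (Fin d)) :
    (j : ℕ) → X → EuclideanSpace ℝ (Fin (mcnnDim d N.dims j))
  | 0 => ℓ
  | j + 1 => fun x => ∑ x', m x x' • N.φ j (mcnnLabel N m ℓ j x')

/-- Evaluation of an MCNN on an `ℝ^d`-LMMC: `ψ ∘ S_{φ_{k+1}} ∘ F_{φ_k} ∘ ⋯ ∘ F_{φ_1}`. -/
noncomputable def mcnnEval {X : Type*} [Fintype X] {d k : ℕ} (N : MCNN d k)
    (m : X → X → ℝ) (μ : X → ℝ) (ℓ : X → EuclideanSpace ℝ (Fin d)) : ℝ :=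
  N.ψ (∑ x, μ x • N.φ k (mcnnLabel N m ℓ k x))

/-- `k`-step couplings between the Markov kernels `mX` and `mY` (defined for `k ≥ 1`). -/
def IsStepCoupling [Fintype X] [Fintype Y] (mX : X → X → ℝ) (mY : Y → Y → ℝ) :
    ℕ → (X → Y → X → Y → ℝ) → Prop
  | 0, _ => False
  | 1, ν => ∀ x y, IsCoupling (mX x) (mY y) (ν x y)
  | k + 2, ν => ∃ νk ν1 : X → Y → X → Y → ℝ,
      IsStepCoupling mX mY (k + 1) νk ∧ (∀ x y, IsCoupling (mX x) (mY y) (ν1 x y)) ∧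
      ν = fun x y x' y' => ∑ x'', ∑ y'', νk x'' y'' x' y' * ν1 x y x'' y''

/-- The `k`-distortion `dis^(k)(γ, ν)`. -/
def disk [Fintype X] [Fintype Y] (dX : X → X → ℝ) (dY : Y → Y → ℝ)
    (γ : X → Y → ℝ) (ν : X → Y → X → Y → ℝ) : ℝ :=
  ∑ x, ∑ y, ∑ x'', ∑ y'', ∑ x', ∑ y',
    |dX x x' - dY y y'| * ν x'' y'' x' y' * γ x'' y'' * γ x y

/-- The `k`-Gromov–Wasserstein distance between Markov chain metric spaces. -/
noncomputable def dGWk [Fintype X] [Fintype Y]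
    (mX : X → X → ℝ) (dX : X → X → ℝ) (μX : X → ℝ)
    (mY : Y → Y → ℝ) (dY : Y → Y → ℝ) (μY : Y → ℝ) (k : ℕ) : ℝ :=
  sInf {r : ℝ | ∃ (γ : X → Y → ℝ) (ν : X → Y → X → Y → ℝ),
      IsCoupling μX μY γ ∧ IsStepCoupling mX mY k ν ∧ r = disk dX dY γ ν}

/-- The absolute Gromov–Wasserstein distance between MCMSs: `sup_{k ≥ 1} d_GW^(k)`. -/
noncomputable def dGWMCMS [Fintype X] [Fintype Y]
    (mX : X → X → ℝ) (dX : X → X → ℝ) (μX : X → ℝ)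
    (mY : Y → Y → ℝ) (dY : Y → Y → ℝ) (μY : Y → ℝ) : ℝ :=
  ⨆ k : ℕ, dGWk mX dX μX mY dY μY (k + 1)

/-- Isomorphism of Markov chain metric spaces. -/
def MCMSIso [Fintype X] [Fintype Y]
    (mX : X → X → ℝ) (dX : X → X → ℝ) (μX : X → ℝ)
    (mY : Y → Y → ℝ) (dY : Y → Y → ℝ) (μY : Y → ℝ) : Prop :=
  ∃ ψ : X ≃ Y, (∀ x x', dY (ψ x) (ψ x') = dX x x') ∧
    (∀ x x', mY (ψ x) (ψ x') = mX x x') ∧ (∀ x, μY (ψ x) = μX x)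

/-- The decoupled Gromov–Wasserstein distance between finite metric measure spaces. -/
noncomputable def dGWbi [Fintype X] [Fintype Y]
    (dX : X → X → ℝ) (μX : X → ℝ) (dY : Y → Y → ℝ) (μY : Y → ℝ) : ℝ :=
  sInf {r : ℝ | ∃ γ γ' : X → Y → ℝ, IsCoupling μX μY γ ∧ IsCoupling μX μY γ' ∧
      r = ∑ x, ∑ y, ∑ x', ∑ y', |dX x x' - dY y y'| * γ' x' y' * γ x y}

/-- `k`-step couplings between the measures `μX` and `μY`
(`k = 0` gives ordinary couplings). -/
def IsMeasureStepCoupling [Fintype X] [Fintype Y] (mX : X → X → ℝ) (mY : Y → Y → ℝ)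
    (μX : X → ℝ) (μY : Y → ℝ) : ℕ → (X → Y → ℝ) → Prop
  | 0, γ => IsCoupling μX μY γ
  | k + 1, γk => ∃ (γ : X → Y → ℝ) (ν : X → Y → X → Y → ℝ),
      IsCoupling μX μY γ ∧ IsStepCoupling mX mY (k + 1) ν ∧
      γk = fun x' y' => ∑ x, ∑ y, ν x y x' y' * γ x y

/-- The WWL label iteration. -/
noncomputable def wwlLabel {V : Type*} [Fintype V] {d : ℕ} (G : SimpleGraph V)
    [DecidableRel G.Adj] (ℓ : V → EuclideanSpace ℝ (Fin d)) :
    ℕ → V → EuclideanSpace ℝ (Fin d)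
  | 0 => ℓ
  | i + 1 => fun v => (1 / 2 : ℝ) •
      (wwlLabel G ℓ i v + ((G.degree v : ℝ))⁻¹ • ∑ v' ∈ G.neighborFinset v, wwlLabel G ℓ i v')

/-- The stacked WWL label `L^k_G = (ℓ^0, …, ℓ^k)`, valued in Euclidean `ℝ^{d(k+1)}`. -/
noncomputable def stackedLabel {V : Type*} [Fintype V] {d : ℕ} (G : SimpleGraph V)
    [DecidableRel G.Adj] (ℓ : V → EuclideanSpace ℝ (Fin d)) (k : ℕ) (v : V) :
    EuclideanSpace ℝ (Fin (k + 1) × Fin d) :=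
  WithLp.toLp 2 (fun p : Fin (k + 1) × Fin d => wwlLabel G ℓ (p.1 : ℕ) v p.2)

lemma exists_lipschitzOnWith_finset {α β : Type*} [MetricSpace α] [PseudoMetricSpace β]
    (s : Finset α) (g : α → β) : ∃ K, LipschitzOnWith K g s := by
  refine ⟨(s ×ˢ s).sup fun p => (dist (g p.1) (g p.2) / dist p.1 p.2).toNNReal,
    LipschitzOnWith.of_dist_le_mul fun a ha b hb => ?_⟩
  rcases eq_or_ne a b with rfl | hab
  · simp
  · have hle := Finset.le_sup (f := fun p : α × α => (dist (g p.1) (g p.2) / dist p.1 p.2).toNNReal)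
      ((Finset.mem_product (p := (a, b))).2 ⟨ha, hb⟩)
    rw [← div_le_iff₀ (dist_pos.2 hab)]
    exact (Real.le_coe_toNNReal _).trans (NNReal.coe_le_coe.2 hle)

lemma exists_lipschitzWith_eqOn_finset {α E : Type*} [MetricSpace α] [NormedAddCommGroup E]
    [NormedSpace ℝ E] [FiniteDimensional ℝ E] (s : Finset α) (g : α → E) :
    ∃ φ : α → E, (∃ K, LipschitzWith K φ) ∧ ∀ a ∈ s, φ a = g a :=
  have ⟨_, hg⟩ := exists_lipschitzOnWith_finset s g
  have ⟨φ, hφ, hφg⟩ := hg.extend_finite_dimension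
  ⟨φ, ⟨_, hφ⟩, fun _ ha => (hφg ha).symm⟩

lemma exists_lipschitzWith_toLp_pi {α ι : Type*} [PseudoMetricSpace α] [Fintype ι]
    {β : ι → Type*} [∀ i, PseudoMetricSpace (β i)] {f : ∀ i, α → β i}
    (hf : ∀ i, ∃ K, LipschitzWith K (f i)) :
    ∃ K, LipschitzWith K fun a => WithLp.toLp 2 fun i => f i a := by
  choose K hK using hf
  have hpi : LipschitzWith (Finset.univ.sup K) fun a i => f i a :=
    LipschitzWith.of_dist_le_mul fun a b => (dist_pi_le_iff (by positivity)).2 fun i =>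
      ((hK i).dist_le_mul a b).trans (mul_le_mul_of_nonneg_right
        (NNReal.coe_le_coe.2 (Finset.le_sup (Finset.mem_univ i))) dist_nonneg)
  exact ⟨_, (PiLp.lipschitzWith_toLp 2 β).comp hpi⟩

section Transport

variable [Fintype X] [Fintype Y]

noncomputable def transportCost (p : X → ℝ) (q : Y → ℝ) (C : X → Y → ℝ) : ℝ :=
  sInf {r : ℝ | ∃ γ : X → Y → ℝ, IsCoupling p q γ ∧ r = ∑ x, ∑ y, C x y * γ x y}

lemma costIter_succ (mX : X → X → ℝ) (mY : Y → Y → ℝ) (D0 : X → Y → ℝ)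
    (j : ℕ) (x : X) (y : Y) :
    costIter mX mY D0 (j + 1) x y = transportCost (mX x) (mY y) (costIter mX mY D0 j) :=
  rfl

lemma isCoupling_mul {p : X → ℝ} {q : Y → ℝ} (hp : IsPMF p) (hq : IsPMF q) :
    IsCoupling p q fun x y => p x * q y :=
  ⟨fun x y => mul_nonneg (hp.1 x) (hq.1 y), fun x => by rw [← Finset.mul_sum, hq.2, mul_one],
    fun y => by rw [← Finset.sum_mul, hp.2, one_mul]⟩

lemma transportCost_nonneg {p : X → ℝ} {q : Y → ℝ} {C : X → Y → ℝ} (hC : ∀ x y, 0 ≤ C x y) :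
    0 ≤ transportCost p q C :=
  Real.sInf_nonneg fun _ ⟨_, hγ, hr⟩ => hr ▸
    Finset.sum_nonneg fun x _ => Finset.sum_nonneg fun y _ => mul_nonneg (hC x y) (hγ.1 x y)

lemma transportCost_le {p : X → ℝ} {q : Y → ℝ} {C : X → Y → ℝ} (hC : ∀ x y, 0 ≤ C x y)
    {γ : X → Y → ℝ} (hγ : IsCoupling p q γ) : transportCost p q C ≤ ∑ x, ∑ y, C x y * γ x y :=
  csInf_le ⟨0, fun _ ⟨_, hγ', hr⟩ => hr ▸ Finset.sum_nonneg fun x _ =>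
    Finset.sum_nonneg fun y _ => mul_nonneg (hC x y) (hγ'.1 x y)⟩ ⟨γ, hγ, rfl⟩

lemma transportCost_eq_zero_of_isCoupling {p : X → ℝ} {q : Y → ℝ} {C : X → Y → ℝ}
    (hC : ∀ x y, 0 ≤ C x y) {γ : X → Y → ℝ} (hγ : IsCoupling p q γ)
    (hsupp : ∀ x y, γ x y ≠ 0 → C x y = 0) : transportCost p q C = 0 := by
  refine le_antisymm ((transportCost_le hC hγ).trans_eq (Finset.sum_eq_zero fun x _ =>
    Finset.sum_eq_zero fun y _ => ?_)) (transportCost_nonneg hC)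
  by_cases h : γ x y = 0
  · rw [h, mul_zero]
  · rw [hsupp x y h, zero_mul]

lemma dist_sum_smul_le_of_isCoupling {E : Type*} [SeminormedAddCommGroup E] [NormedSpace ℝ E]
    {p : X → ℝ} {q : Y → ℝ} {γ : X → Y → ℝ} (hγ : IsCoupling p q γ) (u : X → E) (w : Y → E) :
    dist (∑ x, p x • u x) (∑ y, q y • w y) ≤ ∑ x, ∑ y, dist (u x) (w y) * γ x y := by
  have hsplit : ∑ x, p x • u x - ∑ y, q y • w y = ∑ x, ∑ y, γ x y • (u x - w y) := by
    simp only [smul_sub, Finset.sum_sub_distrib, ← hγ.2.1, ← hγ.2.2, Finset.sum_smul]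
    rw [Finset.sum_comm (f := fun x y => γ x y • w y)]
  rw [dist_eq_norm, hsplit]
  refine (norm_sum_le _ _).trans (Finset.sum_le_sum fun x _ =>
    (norm_sum_le _ _).trans (Finset.sum_le_sum fun y _ => ?_))
  rw [norm_smul, Real.norm_of_nonneg (hγ.1 x y), mul_comm, dist_eq_norm]

open Pointwise in
lemma dist_sum_smul_le_mul_transportCost {E : Type*} [SeminormedAddCommGroup E]
    [NormedSpace ℝ E] {p : X → ℝ} {q : Y → ℝ} (hp : IsPMF p) (hq : IsPMF q) {u : X → E}
    {w : Y → E} {C : X → Y → ℝ} {K : ℝ} (hK : 0 ≤ K) (h : ∀ x y, dist (u x) (w y) ≤ K * C x y) :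
    dist (∑ x, p x • u x) (∑ y, q y • w y) ≤ K * transportCost p q C := by
  rw [transportCost, ← smul_eq_mul, ← Real.sInf_smul_of_nonneg hK]
  refine le_csInf (Set.Nonempty.smul_set ⟨_, _, isCoupling_mul hp hq, rfl⟩) ?_
  rintro _ ⟨_, ⟨γ, hγ, rfl⟩, rfl⟩
  calc dist (∑ x, p x • u x) (∑ y, q y • w y) ≤ ∑ x, ∑ y, dist (u x) (w y) * γ x y :=
        dist_sum_smul_le_of_isCoupling hγ u w
    _ ≤ ∑ x, ∑ y, K * C x y * γ x y := by gcongr with x _ y _; exact hγ.1 x y; exact h x y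
    _ = K • ∑ x, ∑ y, C x y * γ x y := by simp only [smul_eq_mul, Finset.mul_sum, mul_assoc]

end Transport

section Pushforward

variable [Fintype X] [Fintype Y] {V : Type*} [DecidableEq V]

def pushforward (T : X → V) (p : X → ℝ) (v : V) : ℝ :=
  ∑ x, if T x = v then p x else 0

lemma le_pushforward_apply {T : X → V} {p : X → ℝ} (hp : ∀ x, 0 ≤ p x) (x : X) :
    p x ≤ pushforward T p (T x) := by
  simpa [pushforward] using Finset.single_le_sum (f := fun x' => if T x' = T x then p x' else 0)
    (fun x' _ => by split_ifs <;> simp [hp]) (Finset.mem_univ x)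

lemma pushforward_apply_eq_zero {T : X → V} {v : V} (p : X → ℝ) (hv : ∀ x, T x ≠ v) :
    pushforward T p v = 0 :=
  Finset.sum_eq_zero fun x _ => if_neg (hv x)

lemma exists_isCoupling_of_pushforward_eq {TX : X → V} {TY : Y → V} {p : X → ℝ} {q : Y → ℝ}
    (hp : ∀ x, 0 ≤ p x) (hq : ∀ y, 0 ≤ q y) (h : pushforward TX p = pushforward TY q) :
    ∃ γ : X → Y → ℝ, IsCoupling p q γ ∧ ∀ x y, γ x y ≠ 0 → TX x = TY y := by
  set P := pushforward TX p
  have hpP (x : X) : P (TX x) = 0 → p x = 0 := fun h0 =>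
    le_antisymm (h0 ▸ le_pushforward_apply hp x) (hp x)
  have hqP (y : Y) : P (TY y) = 0 → q y = 0 := fun h0 =>
    le_antisymm ((le_pushforward_apply hq y).trans_eq (h ▸ h0)) (hq y)
  -- on each fibre of `TX` and `TY` over `V`, the product coupling normalised by the fibre mass
  refine ⟨fun x y => if TX x = TY y then p x * q y / P (TX x) else 0,
    ⟨fun x y => ?_, fun x => ?_, fun y => ?_⟩, fun x y hxy => by_contra fun hne => hxy (if_neg hne)⟩
  · dsimp only
    split_ifs
    exacts [div_nonneg (mul_nonneg (hp x) (hq y)) ((hp x).trans (le_pushforward_apply hp x)),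
      le_rfl]
  · calc ∑ y, (if TX x = TY y then p x * q y / P (TX x) else 0)
        = p x / P (TX x) * pushforward TY q (TX x) := by
          simp only [pushforward, Finset.mul_sum]
          refine Finset.sum_congr rfl fun y _ => ?_
          by_cases hxy : TX x = TY y
          · simp only [hxy, if_true]; ring
          · simp [hxy, Ne.symm hxy]
      _ = p x := by rw [← h]; exact div_mul_cancel_of_imp (hpP x)
  · calc ∑ x, (if TX x = TY y then p x * q y / P (TX x) else 0)
        = q y / P (TY y) * P (TY y) := by
          simp only [P, pushforward, Finset.mul_sum]
          refine Finset.sum_congr rfl fun x _ => ?_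
          by_cases hxy : TX x = TY y
          · simp only [hxy, if_true]; ring
          · simp [hxy]
      _ = q y := div_mul_cancel_of_imp (hqP y)

lemma transportCost_eq_zero_of_pushforward_eq {TX : X → V} {TY : Y → V} {p : X → ℝ}
    {q : Y → ℝ} (hp : ∀ x, 0 ≤ p x) (hq : ∀ y, 0 ≤ q y) (h : pushforward TX p = pushforward TY q)
    {C : X → Y → ℝ} (hC : ∀ x y, 0 ≤ C x y) (hCT : ∀ x y, TX x = TY y → C x y = 0) :
    transportCost p q C = 0 :=
  have ⟨_, hγ, hsupp⟩ := exists_isCoupling_of_pushforward_eq hp hq h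
  transportCost_eq_zero_of_isCoupling hC hγ fun x y hxy => hCT x y (hsupp x y hxy)

end Pushforward

section WLHierarchy

open scoped Classical

/-- A depth-`(j + 1)` value of the WL measure hierarchy is a measure on depth-`j` values, encoded
by its mass function. -/
def WLLevel (Z : Type*) : ℕ → Type _
  | 0 => Z
  | j + 1 => WLLevel Z j → ℝ

noncomputable def wlMeasure {Z : Type*} [Fintype X] (m : X → X → ℝ) (ℓ : X → Z) :
    (j : ℕ) → X → WLLevel Z j
  | 0 => ℓ
  | j + 1 => fun x => pushforward (wlMeasure m ℓ j) (m x)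

variable [Fintype X] [Fintype Y] {Z : Type*}

lemma exists_wlMeasure_eq_of_wlMeasure_succ_ne_zero {m : X → X → ℝ} {ℓ : X → Z} {j : ℕ} {x : X}
    {v : WLLevel Z j} (hv : wlMeasure m ℓ (j + 1) x v ≠ 0) : ∃ x', wlMeasure m ℓ j x' = v := by
  by_contra! h
  exact hv (pushforward_apply_eq_zero _ h)

noncomputable def wlValues (mX : X → X → ℝ) (ℓX : X → Z) (mY : Y → Y → ℝ) (ℓY : Y → Z) (j : ℕ) :
    Finset (WLLevel Z j) :=
  Finset.univ.image (wlMeasure mX ℓX j) ∪ Finset.univ.image (wlMeasure mY ℓY j)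

lemma mem_wlValues_of_ne_zero (mX : X → X → ℝ) (ℓX : X → Z) (mY : Y → Y → ℝ) (ℓY : Y → Z)
    (j : ℕ) : ∀ w ∈ wlValues mX ℓX mY ℓY (j + 1), ∀ a, w a ≠ 0 → a ∈ wlValues mX ℓX mY ℓY j := by
  intro w hw a ha
  simp only [wlValues, Finset.mem_union, Finset.mem_image, Finset.mem_univ, true_and] at hw ⊢
  rcases hw with ⟨x, rfl⟩ | ⟨y, rfl⟩
  · exact .inl (exists_wlMeasure_eq_of_wlMeasure_succ_ne_zero ha)
  · exact .inr (exists_wlMeasure_eq_of_wlMeasure_succ_ne_zero ha)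

lemma costIter_nonneg (mX : X → X → ℝ) (mY : Y → Y → ℝ) {D0 : X → Y → ℝ}
    (hD0 : ∀ x y, 0 ≤ D0 x y) : ∀ j x y, 0 ≤ costIter mX mY D0 j x y
  | 0 => hD0
  | j + 1 => fun _ _ => transportCost_nonneg (costIter_nonneg mX mY hD0 j)

variable [PseudoMetricSpace Z] {mX : X → X → ℝ} {mY : Y → Y → ℝ} {ℓX : X → Z} {ℓY : Y → Z}

lemma costIter_eq_zero_of_wlMeasure_eq (hmX : ∀ x x', 0 ≤ mX x x') (hmY : ∀ y y', 0 ≤ mY y y') :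
    ∀ j x y, wlMeasure mX ℓX j x = wlMeasure mY ℓY j y →
      costIter mX mY (fun x y => dist (ℓX x) (ℓY y)) j x y = 0
  | 0 => fun x y (h : ℓX x = ℓY y) => by rw [costIter, h, dist_self]
  | j + 1 => fun x y h => transportCost_eq_zero_of_pushforward_eq (hmX x) (hmY y) h
      (costIter_nonneg mX mY (fun _ _ => dist_nonneg) j)
      (costIter_eq_zero_of_wlMeasure_eq hmX hmY j)

lemma dWL_eq_zero_of_pushforward_eq {μX : X → ℝ} {μY : Y → ℝ} {k : ℕ}
    (hmX : ∀ x x', 0 ≤ mX x x') (hmY : ∀ y y', 0 ≤ mY y y')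
    (hμX : ∀ x, 0 ≤ μX x) (hμY : ∀ y, 0 ≤ μY y)
    (h : pushforward (wlMeasure mX ℓX k) μX = pushforward (wlMeasure mY ℓY k) μY) :
    dWL mX μX ℓX mY μY ℓY k = 0 :=
  transportCost_eq_zero_of_pushforward_eq hμX hμY h
    (costIter_nonneg mX mY (fun _ _ => dist_nonneg) k)
    (costIter_eq_zero_of_wlMeasure_eq hmX hmY k)

end WLHierarchy

section Lipschitz

variable {d k : ℕ}

noncomputable def MCNN.layerLip (N : MCNN d k) (j : ℕ) : ℝ≥0 := (N.φ_lip j).choose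

lemma MCNN.lipschitzWith_layerLip (N : MCNN d k) (j : ℕ) : LipschitzWith (N.layerLip j) (N.φ j) :=
  (N.φ_lip j).choose_spec

noncomputable def MCNN.labelLip (N : MCNN d k) (j : ℕ) : ℝ≥0 := ∏ i ∈ Finset.range j, N.layerLip i

lemma MCNN.labelLip_succ (N : MCNN d k) (j : ℕ) :
    N.labelLip (j + 1) = N.layerLip j * N.labelLip j :=
  (Finset.prod_range_succ _ j).trans (mul_comm _ _)

/-- `S_{φ_{k+1}} ∘ F_{φ_k} ∘ ⋯ ∘ F_{φ_1}`, so that `mcnnEval N = N.ψ ∘ mcnnReadout N`. -/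
noncomputable def mcnnReadout [Fintype X] (N : MCNN d k) (m : X → X → ℝ) (μ : X → ℝ)
    (ℓ : X → EuclideanSpace ℝ (Fin d)) : EuclideanSpace ℝ (Fin (mcnnDim d N.dims (k + 1))) :=
  ∑ x, μ x • N.φ k (mcnnLabel N m ℓ k x)

variable [Fintype X] [Fintype Y] (N : MCNN d k) {mX : X → X → ℝ} {mY : Y → Y → ℝ}
  {ℓX : X → EuclideanSpace ℝ (Fin d)} {ℓY : Y → EuclideanSpace ℝ (Fin d)}

lemma dist_sum_smul_φ_le {j : ℕ}
    (hj : ∀ x y, dist (mcnnLabel N mX ℓX j x) (mcnnLabel N mY ℓY j y) ≤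
      N.labelLip j * costIter mX mY (fun x y => dist (ℓX x) (ℓY y)) j x y)
    {p : X → ℝ} {q : Y → ℝ} (hp : IsPMF p) (hq : IsPMF q) :
    dist (∑ x, p x • N.φ j (mcnnLabel N mX ℓX j x)) (∑ y, q y • N.φ j (mcnnLabel N mY ℓY j y)) ≤
      N.labelLip (j + 1) *
        transportCost p q (costIter mX mY (fun x y => dist (ℓX x) (ℓY y)) j) := by
  refine dist_sum_smul_le_mul_transportCost hp hq (by positivity) fun x y =>
    ((N.lipschitzWith_layerLip j).dist_le_mul _ _).trans ?_
  rw [N.labelLip_succ, NNReal.coe_mul, mul_assoc]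
  exact mul_le_mul_of_nonneg_left (hj x y) (by positivity)

lemma dist_mcnnLabel_le (hmX : ∀ x, IsPMF (mX x)) (hmY : ∀ y, IsPMF (mY y)) :
    ∀ j x y, dist (mcnnLabel N mX ℓX j x) (mcnnLabel N mY ℓY j y) ≤
      N.labelLip j * costIter mX mY (fun x y => dist (ℓX x) (ℓY y)) j x y
  | 0 => fun _ _ => by
    rw [MCNN.labelLip, Finset.prod_range_zero, NNReal.coe_one, one_mul]
    exact le_rfl
  | j + 1 => fun x y =>
    dist_sum_smul_φ_le N (dist_mcnnLabel_le hmX hmY j) (hmX x) (hmY y)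

lemma dist_mcnnReadout_le {μX : X → ℝ} {μY : Y → ℝ} (hmX : ∀ x, IsPMF (mX x))
    (hmY : ∀ y, IsPMF (mY y)) (hμX : IsPMF μX) (hμY : IsPMF μY) :
    dist (mcnnReadout N mX μX ℓX) (mcnnReadout N mY μY ℓY) ≤
      N.labelLip (k + 1) * dWL mX μX ℓX mY μY ℓY k :=
  dist_sum_smul_φ_le N (dist_mcnnLabel_le N hmX hmY k) hμX hμY

end Lipschitz

section IndicatorNetwork

open scoped Classical

variable {d k : ℕ} (s : (j : ℕ) → Finset (WLLevel (EuclideanSpace ℝ (Fin d)) j))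

def indicatorDims : ℕ → ℕ := fun j => (s j).card

noncomputable def encode : (j : ℕ) → WLLevel (EuclideanSpace ℝ (Fin d)) j →
    EuclideanSpace ℝ (Fin (mcnnDim d (indicatorDims s) j))
  | 0 => id
  | j + 1 => fun w => WithLp.toLp 2 fun c => w ((s j).equivFin.symm c)

lemma exists_indicatorLayer (j : ℕ) :
    ∃ φ : EuclideanSpace ℝ (Fin (mcnnDim d (indicatorDims s) j)) →
      EuclideanSpace ℝ (Fin (mcnnDim d (indicatorDims s) (j + 1))),
      (∃ K, LipschitzWith K φ) ∧ ∀ a ∈ s j, φ (encode s j a) = WithLp.toLp 2 fun c =>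
        if encode s j ((s j).equivFin.symm c) = encode s j a then 1 else 0 :=
  have ⟨φ, hφ, hφs⟩ := exists_lipschitzWith_eqOn_finset ((s j).image (encode s j)) fun t =>
    WithLp.toLp 2 fun c => if encode s j ((s j).equivFin.symm c) = t then (1 : ℝ) else 0
  ⟨φ, hφ, fun _ ha => hφs _ (Finset.mem_image_of_mem _ ha)⟩

noncomputable def indicatorLayer (j : ℕ) :
    EuclideanSpace ℝ (Fin (mcnnDim d (indicatorDims s) j)) →
      EuclideanSpace ℝ (Fin (mcnnDim d (indicatorDims s) (j + 1))) :=
  (exists_indicatorLayer s j).choose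

noncomputable def indicatorNet (c : Fin (s k).card) : MCNN d k where
  dims := indicatorDims s
  φ := indicatorLayer s
  φ_lip j := (exists_indicatorLayer s j).choose_spec.1
  ψ t := t c
  ψ_cont := PiLp.continuous_apply 2 _ c

variable {s}

section

variable (hs : ∀ j, ∀ w ∈ s (j + 1), ∀ a, w a ≠ 0 → a ∈ s j)
include hs

lemma encode_injOn : ∀ j, Set.InjOn (encode s j) (s j)
  | 0 => Function.injective_id.injOn
  | j + 1 => fun w hw w' hw' h => by
    funext a
    by_cases ha : a ∈ s j
    · simpa [encode] using congrArg (· ((s j).equivFin ⟨a, ha⟩)) h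
    · rw [show w a = 0 from by_contra fun h0 => ha (hs j w hw a h0),
        show w' a = 0 from by_contra fun h0 => ha (hs j w' hw' a h0)]

lemma indicatorLayer_encode {j : ℕ} {a : WLLevel (EuclideanSpace ℝ (Fin d)) j} (ha : a ∈ s j)
    (c : Fin (mcnnDim d (indicatorDims s) (j + 1))) :
    indicatorLayer s j (encode s j a) c = if (s j).equivFin.symm c = a then 1 else 0 := by
  rw [indicatorLayer, (exists_indicatorLayer s j).choose_spec.2 a ha]
  exact if_congr ((encode_injOn hs j).eq_iff (Finset.coe_mem _) ha) rfl rfl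

lemma sum_smul_indicatorLayer_encode {Z : Type*} [Fintype Z] {j : ℕ} (w : Z → ℝ)
    {T : Z → WLLevel (EuclideanSpace ℝ (Fin d)) j} (hT : ∀ z, T z ∈ s j) :
    ∑ z, w z • indicatorLayer s j (encode s j (T z)) = encode s (j + 1) (pushforward T w) := by
  ext c
  simp only [WithLp.ofLp_sum, Finset.sum_apply, PiLp.smul_apply, smul_eq_mul,
    indicatorLayer_encode hs (hT _)]
  exact Finset.sum_congr rfl fun z _ => by split_ifs <;> simp_all [eq_comm]

variable {Z : Type*} [Fintype Z] {m : Z → Z → ℝ} {ℓ : Z → EuclideanSpace ℝ (Fin d)}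
  (hT : ∀ j z, wlMeasure m ℓ j z ∈ s j)
include hT

lemma mcnnLabel_indicatorNet (c : Fin (s k).card) :
    ∀ j z, mcnnLabel (indicatorNet s c) m ℓ j z = encode s j (wlMeasure m ℓ j z)
  | 0 => fun _ => rfl
  | j + 1 => fun z => by
    simp only [mcnnLabel, mcnnLabel_indicatorNet c j]
    exact sum_smul_indicatorLayer_encode hs (m z) (hT j)

lemma mcnnEval_indicatorNet (μ : Z → ℝ) (c : Fin (s k).card) :
    mcnnEval (indicatorNet s c) m μ ℓ =
      pushforward (wlMeasure m ℓ k) μ ((s k).equivFin.symm c) := by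
  simp only [mcnnEval, mcnnLabel_indicatorNet hs hT c]
  exact congrArg (· c) (sum_smul_indicatorLayer_encode hs μ (hT k))

end

end IndicatorNetwork

theorem exists_mcnnEval_ne_of_dWL_ne_zero [Fintype X] [Fintype Y] {d k : ℕ} {mX : X → X → ℝ}
    {mY : Y → Y → ℝ} {ℓX : X → EuclideanSpace ℝ (Fin d)} {ℓY : Y → EuclideanSpace ℝ (Fin d)}
    {μX : X → ℝ} {μY : Y → ℝ}
    (hmX : ∀ x x', 0 ≤ mX x x') (hmY : ∀ y y', 0 ≤ mY y y')
    (hμX : ∀ x, 0 ≤ μX x) (hμY : ∀ y, 0 ≤ μY y) (h : dWL mX μX ℓX mY μY ℓY k ≠ 0) :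
    ∃ N : MCNN d k, mcnnEval N mX μX ℓX ≠ mcnnEval N mY μY ℓY := by
  classical
  let s := wlValues mX ℓX mY ℓY
  have hTX (j : ℕ) (x : X) : wlMeasure mX ℓX j x ∈ s j :=
    Finset.mem_union_left _ (Finset.mem_image_of_mem _ (Finset.mem_univ x))
  have hTY (j : ℕ) (y : Y) : wlMeasure mY ℓY j y ∈ s j :=
    Finset.mem_union_right _ (Finset.mem_image_of_mem _ (Finset.mem_univ y))
  obtain ⟨v, hv⟩ := Function.ne_iff.1 (mt (dWL_eq_zero_of_pushforward_eq hmX hmY hμX hμY) h)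
  have hvs : v ∈ s k := by
    by_contra hvs
    apply hv
    rw [pushforward_apply_eq_zero _ fun x (hx : wlMeasure mX ℓX k x = v) => hvs (hx ▸ hTX k x),
      pushforward_apply_eq_zero _ fun y (hy : wlMeasure mY ℓY k y = v) => hvs (hy ▸ hTY k y)]
  refine ⟨indicatorNet s ((s k).equivFin ⟨v, hvs⟩), ?_⟩
  rwa [mcnnEval_indicatorNet (mem_wlValues_of_ne_zero mX ℓX mY ℓY) hTX,
    mcnnEval_indicatorNet (mem_wlValues_of_ne_zero mX ℓX mY ℓY) hTY, Equiv.symm_apply_apply]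

section Combine

variable {d k : ℕ} {S : Type*} [Fintype S] (Ns : S → MCNN d k)

def combineDims : ℕ → ℕ := fun j => ∑ s, mcnnDim d (Ns s).dims (j + 1)

noncomputable def blockEquiv (j : ℕ) :
    EuclideanSpace ℝ (Fin (mcnnDim d (combineDims Ns) (j + 1))) ≃ₗᵢ[ℝ]
    PiLp 2 fun s => EuclideanSpace ℝ (Fin (mcnnDim d (Ns s).dims (j + 1))) :=
  (LinearIsometryEquiv.piLpCongrLeft 2 ℝ ℝ (Fintype.equivFinOfCardEq
    (by simp only [Fintype.card_sigma, Fintype.card_fin]; rfl)).symm).trans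
    (LinearIsometryEquiv.piLpCurry ℝ 2 fun s (_ : Fin (mcnnDim d (Ns s).dims (j + 1))) => ℝ)

noncomputable def blockProj (s : S) : (j : ℕ) →
    EuclideanSpace ℝ (Fin (mcnnDim d (combineDims Ns) j)) →L[ℝ]
      EuclideanSpace ℝ (Fin (mcnnDim d (Ns s).dims j))
  | 0 => ContinuousLinearMap.id ℝ _
  | j + 1 => (PiLp.proj 2 (fun s => EuclideanSpace ℝ (Fin (mcnnDim d (Ns s).dims (j + 1)))) s).comp
      (blockEquiv Ns j).toContinuousLinearEquiv.toContinuousLinearMap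

noncomputable def combineLayer (j : ℕ) : EuclideanSpace ℝ (Fin (mcnnDim d (combineDims Ns) j)) →
    EuclideanSpace ℝ (Fin (mcnnDim d (combineDims Ns) (j + 1))) :=
  fun v => (blockEquiv Ns j).symm (WithLp.toLp 2 fun s => (Ns s).φ j (blockProj Ns s j v))

lemma exists_lipschitzWith_combineLayer (j : ℕ) : ∃ K, LipschitzWith K (combineLayer Ns j) :=
  have ⟨_, hK⟩ := exists_lipschitzWith_toLp_pi fun s =>
    have ⟨_, hφ⟩ := (Ns s).φ_lip j
    ⟨_, hφ.comp (blockProj Ns s j).lipschitz⟩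
  ⟨_, (blockEquiv Ns j).symm.lipschitz.comp hK⟩

/-- The network running all `Ns s` side by side and reading out with `Ψ`. -/
noncomputable def MCNN.combine (Ψ : (S → ℝ) → ℝ) (hΨ : Continuous Ψ) : MCNN d k where
  dims := combineDims Ns
  φ := combineLayer Ns
  φ_lip := exists_lipschitzWith_combineLayer Ns
  ψ v := Ψ fun s => (Ns s).ψ (blockProj Ns s (k + 1) v)
  ψ_cont := hΨ.comp (continuous_pi fun s => (Ns s).ψ_cont.comp (blockProj Ns s (k + 1)).continuous)

variable {Z : Type*} [Fintype Z]

lemma blockProj_sum_smul_combineLayer (s : S) (j : ℕ) (w : Z → ℝ)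
    (u : Z → EuclideanSpace ℝ (Fin (mcnnDim d (combineDims Ns) j))) :
    blockProj Ns s (j + 1) (∑ z, w z • combineLayer Ns j (u z)) =
      ∑ z, w z • (Ns s).φ j (blockProj Ns s j (u z)) := by
  simp [blockProj.eq_2, combineLayer]

variable (Ψ : (S → ℝ) → ℝ) (hΨ : Continuous Ψ) (m : Z → Z → ℝ) (ℓ : Z → EuclideanSpace ℝ (Fin d))

lemma blockProj_mcnnLabel_combine (s : S) : ∀ j z,
    blockProj Ns s j (mcnnLabel (MCNN.combine Ns Ψ hΨ) m ℓ j z) = mcnnLabel (Ns s) m ℓ j z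
  | 0 => fun _ => rfl
  | j + 1 => fun z => by
    refine (blockProj_sum_smul_combineLayer Ns s j (m z) _).trans ?_
    simp only [blockProj_mcnnLabel_combine s j]
    rfl

lemma mcnnEval_combine (μ : Z → ℝ) :
    mcnnEval (MCNN.combine Ns Ψ hΨ) m μ ℓ = Ψ fun s => mcnnEval (Ns s) m μ ℓ := by
  refine congrArg Ψ (funext fun s => congrArg (Ns s).ψ ?_)
  refine (blockProj_sum_smul_combineLayer Ns s k μ _).trans ?_
  simp only [blockProj_mcnnLabel_combine Ns Ψ hΨ m ℓ s k]

end Combine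

section Universality

variable {d : ℕ} {ι : Type*} [TopologicalSpace ι] {Xc : ι → Type*} [∀ i, Fintype (Xc i)]

def mcnnSubalgebra (k : ℕ) (m : (i : ι) → Xc i → Xc i → ℝ) (μ : (i : ι) → Xc i → ℝ)
    (ℓ : (i : ι) → Xc i → EuclideanSpace ℝ (Fin d)) : Subalgebra ℝ C(SeparationQuotient ι, ℝ) where
  carrier := {g | ∃ N : MCNN d k, ∀ i, g (.mk i) = mcnnEval N (m i) (μ i) (ℓ i)}
  mul_mem' := by
    rintro _ _ ⟨N₁, h₁⟩ ⟨N₂, h₂⟩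
    exact ⟨MCNN.combine ![N₁, N₂] (fun u => u 0 * u 1) (by fun_prop), fun i => by
      simp [mcnnEval_combine, h₁, h₂]⟩
  add_mem' := by
    rintro _ _ ⟨N₁, h₁⟩ ⟨N₂, h₂⟩
    exact ⟨MCNN.combine ![N₁, N₂] (fun u => u 0 + u 1) (by fun_prop), fun i => by
      simp [mcnnEval_combine, h₁, h₂]⟩
  algebraMap_mem' r := ⟨MCNN.combine (Fin.elim0 : Fin 0 → MCNN d k) (fun _ => r) continuous_const,
    fun i => by simp [mcnnEval_combine]⟩

lemma mcnnSubalgebra_separatesPoints {k : ℕ} {m : (i : ι) → Xc i → Xc i → ℝ}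
    {μ : (i : ι) → Xc i → ℝ} {ℓ : (i : ι) → Xc i → EuclideanSpace ℝ (Fin d)}
    (hcont : ∀ N : MCNN d k, Continuous fun i => mcnnEval N (m i) (μ i) (ℓ i))
    (hsep : ∀ i j, ¬Inseparable i j →
      ∃ N : MCNN d k, mcnnEval N (m i) (μ i) (ℓ i) ≠ mcnnEval N (m j) (μ j) (ℓ j)) :
    (mcnnSubalgebra k m μ ℓ).SeparatesPoints := by
  intro x y hxy
  obtain ⟨i, rfl⟩ := SeparationQuotient.surjective_mk x
  obtain ⟨j, rfl⟩ := SeparationQuotient.surjective_mk y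
  obtain ⟨N, hN⟩ := hsep i j (mt SeparationQuotient.mk_eq_mk.2 hxy)
  let g : C(SeparationQuotient ι, ℝ) :=
    ⟨SeparationQuotient.lift _ fun _ _ h => (h.map (hcont N)).eq,
      SeparationQuotient.continuous_lift (hcont N)⟩
  exact ⟨g, ⟨g, ⟨N, fun _ => rfl⟩, rfl⟩, hN⟩

end Universality

theorem mcnn_universal {d k : ℕ} {ι : Type*} [PseudoMetricSpace ι] [CompactSpace ι]
    (Xc : ι → Type*) [∀ i, Fintype (Xc i)]
    (m : (i : ι) → Xc i → Xc i → ℝ) (μ : (i : ι) → Xc i → ℝ)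
    (ℓ : (i : ι) → Xc i → EuclideanSpace ℝ (Fin d))
    (hMMC : ∀ i, IsMMC (m i) (μ i))
    (hdist : ∀ i j, dist i j = dWL (m i) (μ i) (ℓ i) (m j) (μ j) (ℓ j) k)
    (f : ι → ℝ) (hf : Continuous f) (ε : ℝ) (hε : 0 < ε) :
    ∃ N : MCNN d k, ∀ i, |mcnnEval N (m i) (μ i) (ℓ i) - f i| < ε := by
  have hcont (N : MCNN d k) : Continuous fun i => mcnnEval N (m i) (μ i) (ℓ i) :=
    N.ψ_cont.comp (LipschitzWith.of_dist_le_mul fun i j => hdist i j ▸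
      dist_mcnnReadout_le N (hMMC i).1 (hMMC j).1 (hMMC i).2.1 (hMMC j).2.1).continuous
  have hsep (i j : ι) (hij : ¬Inseparable i j) :
      ∃ N : MCNN d k, mcnnEval N (m i) (μ i) (ℓ i) ≠ mcnnEval N (m j) (μ j) (ℓ j) :=
    exists_mcnnEval_ne_of_dWL_ne_zero (fun x x' => ((hMMC i).1 x).1 x')
      (fun y y' => ((hMMC j).1 y).1 y') (hMMC i).2.1.1 (hMMC j).2.1.1
      (hdist i j ▸ mt Metric.inseparable_iff.2 hij)
  have : CompactSpace (SeparationQuotient ι) := Quotient.compactSpace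
  obtain ⟨⟨g, N, hN⟩, hg⟩ :=
    ContinuousMap.exists_mem_subalgebra_near_continuous_of_separatesPoints _
      (mcnnSubalgebra_separatesPoints hcont hsep)
      (SeparationQuotient.lift f fun _ _ h => (h.map hf).eq) (SeparationQuotient.continuous_lift hf)
      ε hε
  exact ⟨N, fun i => by simpa [hN, Real.norm_eq_abs] using hg (.mk i)⟩

end WLGW
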